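/- arXiv:2505.09554 — 4 statements merged into one kernel-verified Lean document; each statement's English description precedes it below -/
import Mathlib

section
/- Let sigma be a unit vector in R^3 and epsilon in {+1,-1}. The map R_sigma^epsilon restricted to {y in R^3 : y · sigma ≠ -epsilon |y|} is a bijection onto {nu in R^3 : epsilon (nu · sigma) > 0}, with inverse nu -> 2nu - (|nu| / (nu/|nu| · sigma)) sigma. -/
set_option maxHeartbeats 800000 in
/-- `R_σ^ε` is a bijection from `{y : y·σ ≠ -ε|y|}` onto `{ν : ε (ν·σ) > 0}`,
with inverse `ν ↦ 2ν - (|ν|/(ν̂·σ)) σ`. -/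
theorem Rsigma_bijection (σ : EuclideanSpace ℝ (Fin 3)) (hσ : ‖σ‖ = 1) (ε : ℝ)
    (hε : ε = 1 ∨ ε = -1) :
    Set.BijOn (fun y : EuclideanSpace ℝ (Fin 3) => (1/2 : ℝ) • y + (ε * ‖y‖ / 2) • σ)
      {y : EuclideanSpace ℝ (Fin 3) | (inner ℝ y σ : ℝ) ≠ -ε * ‖y‖}
      {ν : EuclideanSpace ℝ (Fin 3) | 0 < ε * (inner ℝ ν σ : ℝ)}
    ∧ Set.InvOn (fun ν : EuclideanSpace ℝ (Fin 3) =>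
          (2 : ℝ) • ν - (‖ν‖ / (inner ℝ (‖ν‖⁻¹ • ν) σ : ℝ)) • σ)
        (fun y : EuclideanSpace ℝ (Fin 3) => (1/2 : ℝ) • y + (ε * ‖y‖ / 2) • σ)
        {y : EuclideanSpace ℝ (Fin 3) | (inner ℝ y σ : ℝ) ≠ -ε * ‖y‖}
        {ν : EuclideanSpace ℝ (Fin 3) | 0 < ε * (inner ℝ ν σ : ℝ)} := by
  have hε2 : ε * ε = 1 := by rcases hε with h | h <;> norm_num [h]
  have hσσ : (inner ℝ σ σ : ℝ) = 1 := by
    rw [real_inner_self_eq_norm_mul_norm, hσ]; norm_num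
  set F := fun y : EuclideanSpace ℝ (Fin 3) => (1/2 : ℝ) • y + (ε * ‖y‖ / 2) • σ with hFdef
  set G := fun ν : EuclideanSpace ℝ (Fin 3) =>
      (2 : ℝ) • ν - (‖ν‖ / (inner ℝ (‖ν‖⁻¹ • ν) σ : ℝ)) • σ with hGdef
  have hFin : ∀ y : EuclideanSpace ℝ (Fin 3),
      (inner ℝ (F y) σ : ℝ) = (inner ℝ y σ : ℝ) / 2 + ε * ‖y‖ / 2 := by
    intro y
    simp only [hFdef, inner_add_left, real_inner_smul_left, hσσ]
    ring
  have hmap1 : Set.MapsTo F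
      {y : EuclideanSpace ℝ (Fin 3) | (inner ℝ y σ : ℝ) ≠ -ε * ‖y‖}
      {ν : EuclideanSpace ℝ (Fin 3) | 0 < ε * (inner ℝ ν σ : ℝ)} := by
    intro y hy
    simp only [Set.mem_setOf_eq] at hy ⊢
    rw [hFin y]
    have hcs : |(inner ℝ y σ : ℝ)| ≤ ‖y‖ := by
      have := abs_real_inner_le_norm y σ
      rwa [hσ, mul_one] at this
    rcases abs_le.mp hcs with ⟨h1, h2⟩
    have hne : ε * (inner ℝ y σ : ℝ) ≠ -‖y‖ := by
      intro h
      apply hy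
      linear_combination ε * h - (inner ℝ y σ : ℝ) * hε2
    have hle : -‖y‖ ≤ ε * (inner ℝ y σ : ℝ) := by
      rcases hε with h | h <;> subst h <;> nlinarith
    have hlt : -‖y‖ < ε * (inner ℝ y σ : ℝ) := lt_of_le_of_ne hle (Ne.symm hne)
    nlinarith
  -- left inverse
  have hleft : ∀ y ∈ {y : EuclideanSpace ℝ (Fin 3) | (inner ℝ y σ : ℝ) ≠ -ε * ‖y‖},
      G (F y) = y := by
    intro y hy
    have hB := hmap1 hy
    simp only [Set.mem_setOf_eq] at hB
    set p : ℝ := inner ℝ y σ with hp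
    set r : ℝ := ‖y‖ with hr
    have hq : (inner ℝ (F y) σ : ℝ) = (p + ε * r) / 2 := by rw [hFin y]; ring
    have hq0 : (inner ℝ (F y) σ : ℝ) ≠ 0 := by
      intro h; rw [h, mul_zero] at hB; exact lt_irrefl 0 hB
    have hν0 : ‖F y‖ ≠ 0 := by
      intro h
      rw [norm_eq_zero] at h
      rw [h, inner_zero_left] at hq0
      exact hq0 rfl
    have hσy : (inner ℝ σ y : ℝ) = p := by rw [real_inner_comm]
    have hnn : ‖F y‖ * ‖F y‖ = (r * r + ε * r * p) / 2 := by
      rw [← real_inner_self_eq_norm_mul_norm]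
      simp only [hFdef, inner_add_left, inner_add_right, real_inner_smul_left,
        real_inner_smul_right, hσσ, hσy, ← hp, ← hr]
      rw [real_inner_self_eq_norm_mul_norm, ← hr]
      linear_combination (r * r / 4) * hε2
    have hcoef : ‖F y‖ / (inner ℝ (‖F y‖⁻¹ • F y) σ : ℝ) = ε * r := by
      have hc1 : ‖F y‖ / (inner ℝ (‖F y‖⁻¹ • F y) σ : ℝ)
          = ‖F y‖ * ‖F y‖ / (inner ℝ (F y) σ : ℝ) := by
        rw [real_inner_smul_left]
        field_simp
      rw [hc1, div_eq_iff hq0, hq]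
      linear_combination hnn - (r * r / 2) * hε2
    simp only [hGdef]
    rw [hcoef]
    simp only [hFdef]
    rw [← hr]
    module
  -- right inverse and G maps B into A
  have hright : ∀ ν ∈ {ν : EuclideanSpace ℝ (Fin 3) | 0 < ε * (inner ℝ ν σ : ℝ)},
      ((inner ℝ (G ν) σ : ℝ) ≠ -ε * ‖G ν‖) ∧ F (G ν) = ν := by
    intro ν hν
    simp only [Set.mem_setOf_eq] at hν
    set q : ℝ := inner ℝ ν σ with hqdef
    have hq0 : q ≠ 0 := by
      intro h; rw [h, mul_zero] at hν; exact lt_irrefl 0 hν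
    have hν0 : ‖ν‖ ≠ 0 := by
      intro h
      apply hq0
      rw [hqdef, norm_eq_zero.mp h, inner_zero_left]
    set n : ℝ := ‖ν‖ with hn
    have hnpos : 0 < n := lt_of_le_of_ne (norm_nonneg ν) (Ne.symm hν0)
    have hcoef : ‖ν‖ / (inner ℝ (‖ν‖⁻¹ • ν) σ : ℝ) = n * n / q := by
      rw [real_inner_smul_left, ← hqdef, ← hn]
      field_simp
    set c : ℝ := n * n / q with hc
    have hcq : c * q = n * n := by rw [hc]; field_simp
    have hGν : G ν = (2 : ℝ) • ν - c • σ := by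
      simp only [hGdef]; rw [hcoef]
    have hσν : (inner ℝ σ ν : ℝ) = q := by rw [real_inner_comm]
    have hys : (inner ℝ (G ν) σ : ℝ) = 2 * q - c := by
      rw [hGν, inner_sub_left, real_inner_smul_left, real_inner_smul_left, hσσ, ← hqdef]
      ring
    have hyy : (inner ℝ (G ν) (G ν) : ℝ) = c * c := by
      rw [hGν]
      simp only [inner_sub_left, inner_sub_right, real_inner_smul_left,
        real_inner_smul_right, hσσ, hσν, ← hqdef]
      rw [real_inner_self_eq_norm_mul_norm, ← hn]
      linear_combination (4 : ℝ) * hcq - 8 * n ^ 2 * (mul_inv_cancel₀ hq0)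
    have hεc : 0 < ε * c := by
      have h1 : ε * c = (n * n) * (ε * q) / (q * q) := by rw [hc]; field_simp
      rw [h1]
      exact div_pos (mul_pos (mul_pos hnpos hnpos) hν) (mul_self_pos.mpr hq0)
    have hny : ‖G ν‖ = ε * c := by
      have h1 : ‖G ν‖ ^ 2 = (ε * c) ^ 2 := by
        rw [← real_inner_self_eq_norm_sq, hyy]
        linear_combination (-(c * c)) * hε2
      have h2 : ‖G ν‖ = Real.sqrt (‖G ν‖ ^ 2) := (Real.sqrt_sq (norm_nonneg _)).symm
      rw [h2, h1, Real.sqrt_sq (le_of_lt hεc)]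
    constructor
    · rw [hys, hny]
      intro h
      apply hq0
      linear_combination (1/2 : ℝ) * h - (c/2) * hε2
    · simp only [hFdef]
      rw [hny]
      have hεεc : ε * (ε * c) = c := by linear_combination c * hε2
      rw [hεεc, hGν]
      module
  have hmap2 : Set.MapsTo G
      {ν : EuclideanSpace ℝ (Fin 3) | 0 < ε * (inner ℝ ν σ : ℝ)}
      {y : EuclideanSpace ℝ (Fin 3) | (inner ℝ y σ : ℝ) ≠ -ε * ‖y‖} := by
    intro ν hν
    exact (hright ν hν).1
  have hinv : Set.InvOn G F
      {y : EuclideanSpace ℝ (Fin 3) | (inner ℝ y σ : ℝ) ≠ -ε * ‖y‖}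
      {ν : EuclideanSpace ℝ (Fin 3) | 0 < ε * (inner ℝ ν σ : ℝ)} :=
    ⟨fun y hy => hleft y hy, fun ν hν => (hright ν hν).2⟩
  exact ⟨hinv.bijOn hmap1 hmap2, hinv⟩
end

section
/- For any v, v1 in R^3 and sigma in S^2, with v* and v1* the post-collisional velocities and v1*_hat = v1*/|v1*|, one has the lower bound 4(1 + |v*|^2) ≥ (1 + |v1*|^2) - |v1*|^2 (v1*_hat · sigma)^2. -/
/-- Lower bound on the Japanese bracket of `v*` in terms of `v1*`:
`4(1 + |v*|²) ≥ (1 + |v1*|²) - (v1* · σ)²`. -/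
theorem bracket_lower_bound (v v1 σ : EuclideanSpace ℝ (Fin 3)) (hσ : ‖σ‖ = 1) :
    4 * (1 + ‖(1/2 : ℝ) • (v + v1) - (‖v - v1‖ / 2) • σ‖ ^ 2)
      ≥ (1 + ‖(1/2 : ℝ) • (v + v1) + (‖v - v1‖ / 2) • σ‖ ^ 2)
        - (inner ℝ ((1/2 : ℝ) • (v + v1) + (‖v - v1‖ / 2) • σ) σ : ℝ) ^ 2 := by
  set V : EuclideanSpace ℝ (Fin 3) := (1/2 : ℝ) • (v + v1) with hV
  set r : ℝ := ‖v - v1‖ / 2 with hr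
  have hr0 : 0 ≤ r := by positivity
  have hnsmul : ‖r • σ‖ = r := by
    rw [norm_smul, hσ, mul_one, Real.norm_eq_abs, abs_of_nonneg hr0]
  have h1 : ‖V - r • σ‖ ^ 2 = ‖V‖ ^ 2 - 2 * (inner ℝ V (r • σ) : ℝ) + r ^ 2 := by
    rw [norm_sub_sq_real, hnsmul]
  have h2 : ‖V + r • σ‖ ^ 2 = ‖V‖ ^ 2 + 2 * (inner ℝ V (r • σ) : ℝ) + r ^ 2 := by
    rw [norm_add_sq_real, hnsmul]
  have hi : (inner ℝ V (r • σ) : ℝ) = r * (inner ℝ V σ : ℝ) := by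
    rw [real_inner_smul_right]
  have hσσ : (inner ℝ σ σ : ℝ) = 1 := by
    rw [real_inner_self_eq_norm_sq, hσ]; norm_num
  have h3 : (inner ℝ (V + r • σ) σ : ℝ) = (inner ℝ V σ : ℝ) + r := by
    simp only [inner_add_left, real_inner_smul_left, hσσ, mul_one]
  have hcs : (inner ℝ V σ : ℝ) ^ 2 ≤ ‖V‖ ^ 2 := by
    have := abs_real_inner_le_norm V σ
    rw [hσ, mul_one] at this
    nlinarith [abs_nonneg (inner ℝ V σ : ℝ), sq_abs (inner ℝ V σ : ℝ)]
  rw [h1, h2, h3, hi]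
  nlinarith [sq_nonneg ((inner ℝ V σ : ℝ) - r)]
end

section
/- For all real t > 2 and real exponents alpha, beta > 1, the integral from 0 to t-1 of <s>^{-alpha} (t-s)^{-beta} ds is bounded by C <t>^{-min(alpha, beta)}, where C depends only on alpha and beta and <s> = sqrt(1+s^2). -/
open Real intervalIntegral

lemma jap_ge_one (s : ℝ) : (1:ℝ) ≤ Real.sqrt (1 + s ^ 2) := by
  nlinarith [Real.sq_sqrt (show (0:ℝ) ≤ 1 + s ^ 2 by positivity), Real.sqrt_nonneg (1 + s ^ 2)]

lemma jap_ge_self {s : ℝ} (hs : 0 ≤ s) : s ≤ Real.sqrt (1 + s ^ 2) := by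
  calc s = Real.sqrt (s ^ 2) := by rw [Real.sqrt_sq hs]
  _ ≤ Real.sqrt (1 + s ^ 2) := Real.sqrt_le_sqrt (by nlinarith)

lemma jap_cont (α : ℝ) : Continuous (fun s : ℝ => (Real.sqrt (1 + s ^ 2)) ^ (-α)) := by
  apply Continuous.rpow_const
  · exact (continuous_const.add (continuous_pow 2)).sqrt
  · intro s; left
    have := jap_ge_one s; positivity

lemma jap_int_bound (α : ℝ) (hα : 1 < α) {x : ℝ} (hx : 1 ≤ x) :
    ∫ s in (0:ℝ)..x, (Real.sqrt (1 + s ^ 2)) ^ (-α) ≤ 1 + 1/(α-1) := by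
  have hint : ∀ a b : ℝ, IntervalIntegrable (fun s : ℝ => (Real.sqrt (1 + s ^ 2)) ^ (-α)) MeasureTheory.volume a b :=
    fun a b => (jap_cont α).intervalIntegrable a b
  rw [← intervalIntegral.integral_add_adjacent_intervals (hint 0 1) (hint 1 x)]
  have h1 : ∫ s in (0:ℝ)..1, (Real.sqrt (1 + s ^ 2)) ^ (-α) ≤ 1 := by
    calc ∫ s in (0:ℝ)..1, (Real.sqrt (1 + s ^ 2)) ^ (-α)
        ≤ ∫ _ in (0:ℝ)..1, (1:ℝ) := by
          apply intervalIntegral.integral_mono_on zero_le_one (hint 0 1)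
            (continuous_const.intervalIntegrable 0 1)
          intro s _
          exact Real.rpow_le_one_of_one_le_of_nonpos (jap_ge_one s) (by linarith)
      _ = 1 := by simp
  have h2 : ∫ s in (1:ℝ)..x, (Real.sqrt (1 + s ^ 2)) ^ (-α) ≤ 1/(α-1) := by
    have hrint : IntervalIntegrable (fun s : ℝ => s ^ (-α)) MeasureTheory.volume 1 x := by
      apply ContinuousOn.intervalIntegrable
      apply ContinuousOn.rpow_const continuousOn_id
      intro s hs
      rw [Set.uIcc_of_le hx] at hs
      exact Or.inl (by simp; linarith [hs.1])
    calc ∫ s in (1:ℝ)..x, (Real.sqrt (1 + s ^ 2)) ^ (-α)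
        ≤ ∫ s in (1:ℝ)..x, s ^ (-α) := by
          apply intervalIntegral.integral_mono_on hx (hint 1 x) hrint
          intro s hs
          exact Real.rpow_le_rpow_of_nonpos (by linarith [hs.1])
            (jap_ge_self (by linarith [hs.1])) (by linarith)
      _ = (x ^ (-α + 1) - 1 ^ (-α + 1)) / (-α + 1) := by
          apply integral_rpow
          refine Or.inr ⟨by intro h; rw [neg_eq_iff_eq_neg] at h; linarith, ?_⟩
          rw [Set.uIcc_of_le hx]
          intro h
          exact absurd h.1 (by norm_num)
      _ ≤ 1/(α-1) := by
          rw [Real.one_rpow, div_le_iff_of_neg (by linarith : -α + 1 < 0)]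
          have hx0 : (0:ℝ) ≤ x ^ (-α + 1) := Real.rpow_nonneg (by linarith) _
          have he : 1/(α-1) * (-α + 1) = -1 := by
            rw [div_mul_eq_mul_div, one_mul, div_eq_iff (show α - 1 ≠ 0 by intro h; linarith [sub_eq_zero.mp h])]; ring
          linarith
  linarith

/-- Decay of the convolution-in-time integral: for `α, β > 1`,
`∫₀^{t-1} ⟨s⟩^{-α} (t-s)^{-β} ds ≲ ⟨t⟩^{-min(α,β)}` for `t > 2`. -/
theorem time_bulk_bound (α β : ℝ) (hα : 1 < α) (hβ : 1 < β) :
    ∃ C > 0, ∀ t : ℝ, 2 < t →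
      ∫ s in (0 : ℝ)..(t - 1),
          (Real.sqrt (1 + s ^ 2)) ^ (-α) * (t - s) ^ (-β)
        ≤ C * (Real.sqrt (1 + t ^ 2)) ^ (-(min α β)) := by
  have hs2 : (0:ℝ) < 2 * Real.sqrt 2 := by positivity
  refine ⟨(2 * Real.sqrt 2) ^ β * (1 + 1/(α-1)) + (2 * Real.sqrt 2) ^ α * (1/(β-1)), ?_, ?_⟩
  · have h1 : (0:ℝ) < (2 * Real.sqrt 2) ^ β := Real.rpow_pos_of_pos hs2 _
    have h2 : (0:ℝ) < (2 * Real.sqrt 2) ^ α := Real.rpow_pos_of_pos hs2 _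
    have h3 : (0:ℝ) < 1/(α-1) := div_pos one_pos (by linarith)
    have h4 : (0:ℝ) < 1/(β-1) := div_pos one_pos (by linarith)
    nlinarith
  intro t ht
  have ht2 : (1:ℝ) < t/2 := by linarith
  have ht2' : t/2 < t - 1 := by linarith
  set f : ℝ → ℝ := fun s => (Real.sqrt (1 + s ^ 2)) ^ (-α) * (t - s) ^ (-β) with hf
  -- continuity of f on [0, t-1]
  have hcontf : ContinuousOn f (Set.Icc 0 (t-1)) := by
    apply ContinuousOn.mul ((jap_cont α).continuousOn)
    apply ContinuousOn.rpow_const (continuous_const.sub continuous_id).continuousOn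
    intro s hs
    exact Or.inl (ne_of_gt (by show (0:ℝ) < t - s; linarith [hs.2]))
  have hi1 : IntervalIntegrable f MeasureTheory.volume 0 (t/2) := by
    apply ContinuousOn.intervalIntegrable
    apply hcontf.mono
    rw [Set.uIcc_of_le (by linarith)]
    exact Set.Icc_subset_Icc le_rfl (by linarith)
  have hi2 : IntervalIntegrable f MeasureTheory.volume (t/2) (t-1) := by
    apply ContinuousOn.intervalIntegrable
    apply hcontf.mono
    rw [Set.uIcc_of_le (by linarith)]
    exact Set.Icc_subset_Icc (by linarith) le_rfl
  have hsplit : ∫ s in (0:ℝ)..(t-1), f s = (∫ s in (0:ℝ)..(t/2), f s) + ∫ s in (t/2)..(t-1), f s :=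
    (intervalIntegral.integral_add_adjacent_intervals hi1 hi2).symm
  -- piece 1
  have hp1 : ∫ s in (0:ℝ)..(t/2), f s ≤ (1 + 1/(α-1)) * (t/2) ^ (-β) := by
    have hb : ∫ s in (0:ℝ)..(t/2), f s
        ≤ ∫ s in (0:ℝ)..(t/2), (Real.sqrt (1 + s ^ 2)) ^ (-α) * (t/2) ^ (-β) := by
      apply intervalIntegral.integral_mono_on (by linarith) hi1
        (((jap_cont α).mul continuous_const).intervalIntegrable 0 (t/2))
      intro s hs
      apply mul_le_mul_of_nonneg_left _ (Real.rpow_nonneg (Real.sqrt_nonneg _) _)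
      exact Real.rpow_le_rpow_of_nonpos (by linarith) (by linarith [hs.2]) (by linarith)
    rw [intervalIntegral.integral_mul_const] at hb
    calc ∫ s in (0:ℝ)..(t/2), f s
        ≤ (∫ s in (0:ℝ)..(t/2), (Real.sqrt (1 + s ^ 2)) ^ (-α)) * (t/2) ^ (-β) := hb
      _ ≤ (1 + 1/(α-1)) * (t/2) ^ (-β) := by
          apply mul_le_mul_of_nonneg_right (jap_int_bound α hα (by linarith))
            (Real.rpow_nonneg (by linarith) _)
  -- piece 2
  have hp2 : ∫ s in (t/2)..(t-1), f s ≤ (t/2) ^ (-α) * (1/(β-1)) := by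
    have hb : ∫ s in (t/2)..(t-1), f s
        ≤ ∫ s in (t/2)..(t-1), (t/2) ^ (-α) * (t - s) ^ (-β) := by
      have hrint : IntervalIntegrable (fun s : ℝ => (t/2) ^ (-α) * (t - s) ^ (-β))
          MeasureTheory.volume (t/2) (t-1) := by
        apply ContinuousOn.intervalIntegrable
        apply ContinuousOn.mul continuousOn_const
        apply ContinuousOn.rpow_const (continuous_const.sub continuous_id).continuousOn
        intro s hs
        rw [Set.uIcc_of_le (by linarith)] at hs
        exact Or.inl (ne_of_gt (by show (0:ℝ) < t - s; linarith [hs.2]))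
      apply intervalIntegral.integral_mono_on (by linarith) hi2 hrint
      intro s hs
      apply mul_le_mul_of_nonneg_right _ (Real.rpow_nonneg (by linarith [hs.2]) _)
      exact Real.rpow_le_rpow_of_nonpos (by linarith)
        (le_trans hs.1 (jap_ge_self (by linarith [hs.1]))) (by linarith)
    rw [intervalIntegral.integral_const_mul] at hb
    have hsub : ∫ s in (t/2)..(t-1), (t - s) ^ (-β) = ∫ u in (1:ℝ)..(t/2), u ^ (-β) := by
      rw [intervalIntegral.integral_comp_sub_left (fun u => u ^ (-β)) t]
      congr 1 <;> ring
    have hval : ∫ u in (1:ℝ)..(t/2), u ^ (-β) ≤ 1/(β-1) := by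
      rw [integral_rpow (Or.inr ⟨by intro h; rw [neg_eq_iff_eq_neg] at h; linarith, by
        rw [Set.uIcc_of_le (by linarith : (1:ℝ) ≤ t/2)]
        intro h; exact absurd h.1 (by norm_num)⟩)]
      rw [Real.one_rpow, div_le_iff_of_neg (by linarith : -β + 1 < 0)]
      have hx0 : (0:ℝ) ≤ (t/2) ^ (-β + 1) := Real.rpow_nonneg (by linarith) _
      have he : 1/(β-1) * (-β + 1) = -1 := by
        rw [div_mul_eq_mul_div, one_mul, div_eq_iff (show β - 1 ≠ 0 by intro h; linarith [sub_eq_zero.mp h])]; ring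
      linarith
    calc ∫ s in (t/2)..(t-1), f s
        ≤ (t/2) ^ (-α) * ∫ s in (t/2)..(t-1), (t - s) ^ (-β) := hb
      _ ≤ (t/2) ^ (-α) * (1/(β-1)) := by
          apply mul_le_mul_of_nonneg_left _ (Real.rpow_nonneg (by linarith) _)
          rw [hsub]; exact hval
  -- compare (t/2)^(-γ) with ⟨t⟩^(-min α β) for γ = α, β
  have hjt : (1:ℝ) ≤ Real.sqrt (1 + t ^ 2) := jap_ge_one t
  have hkey : ∀ γ : ℝ, min α β ≤ γ →
      (t/2) ^ (-γ) ≤ (2 * Real.sqrt 2) ^ γ * (Real.sqrt (1 + t ^ 2)) ^ (-(min α β)) := by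
    intro γ hγ
    have hγ0 : 0 < γ := lt_of_lt_of_le (by rw [lt_min_iff]; constructor <;> linarith) hγ
    have hle : Real.sqrt (1 + t ^ 2) / (2 * Real.sqrt 2) ≤ t/2 := by
      have h1 : Real.sqrt (1 + t ^ 2) ≤ Real.sqrt 2 * t := by
        rw [show Real.sqrt 2 * t = Real.sqrt (2 * t ^ 2) by
          rw [Real.sqrt_mul (by norm_num), Real.sqrt_sq (by linarith)]]
        exact Real.sqrt_le_sqrt (by nlinarith)
      rw [div_le_div_iff₀ hs2 two_pos]
      calc Real.sqrt (1 + t ^ 2) * 2 ≤ Real.sqrt 2 * t * 2 := by nlinarith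
        _ = t * (2 * Real.sqrt 2) := by ring
    have hpos : 0 < Real.sqrt (1 + t ^ 2) / (2 * Real.sqrt 2) := by positivity
    calc (t/2) ^ (-γ) ≤ (Real.sqrt (1 + t ^ 2) / (2 * Real.sqrt 2)) ^ (-γ) :=
          Real.rpow_le_rpow_of_nonpos hpos hle (by linarith)
      _ = (2 * Real.sqrt 2) ^ γ * (Real.sqrt (1 + t ^ 2)) ^ (-γ) := by
          rw [Real.div_rpow (Real.sqrt_nonneg _) hs2.le, Real.rpow_neg hs2.le,
            div_eq_mul_inv, inv_inv, mul_comm]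
      _ ≤ (2 * Real.sqrt 2) ^ γ * (Real.sqrt (1 + t ^ 2)) ^ (-(min α β)) := by
          apply mul_le_mul_of_nonneg_left _ (Real.rpow_nonneg hs2.le _)
          exact Real.rpow_le_rpow_of_exponent_le hjt (by linarith)
  have hka := hkey α (min_le_left _ _)
  have hkb := hkey β (min_le_right _ _)
  have hc1 : (0:ℝ) ≤ 1 + 1/(α-1) := by
    have := div_pos one_pos (show (0:ℝ) < α - 1 by linarith); linarith
  have hc2 : (0:ℝ) ≤ 1/(β-1) := (div_pos one_pos (by linarith)).le
  rw [hsplit]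
  calc (∫ s in (0:ℝ)..(t/2), f s) + ∫ s in (t/2)..(t-1), f s
      ≤ (1 + 1/(α-1)) * (t/2) ^ (-β) + (t/2) ^ (-α) * (1/(β-1)) := by linarith
    _ ≤ (1 + 1/(α-1)) * ((2 * Real.sqrt 2) ^ β * (Real.sqrt (1 + t ^ 2)) ^ (-(min α β)))
        + ((2 * Real.sqrt 2) ^ α * (Real.sqrt (1 + t ^ 2)) ^ (-(min α β))) * (1/(β-1)) := by
        have hp : (0:ℝ) ≤ (t/2) ^ (-α) := Real.rpow_nonneg (by linarith) _
        nlinarith [mul_le_mul_of_nonneg_left hkb hc1, mul_le_mul_of_nonneg_right hka hc2]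
    _ = ((2 * Real.sqrt 2) ^ β * (1 + 1/(α-1)) + (2 * Real.sqrt 2) ^ α * (1/(β-1)))
        * (Real.sqrt (1 + t ^ 2)) ^ (-(min α β)) := by ring
end

section
/- The free transport semigroup satisfies the dispersive decay estimate: for p ≥ r ≥ 1 and t ≠ 0, ||S(t) f||_{L^p_x L^r_v} ≤ |t|^{-3(1/r - 1/p)} ||f||_{L^r_x L^p_v}. -/
open MeasureTheory Function Set
open scoped ENNReal


private lemma rpow_iSup {g : ℕ → ℝ≥0∞} {q : ℝ} (hq : 0 < q) :
    (⨆ n, g n) ^ q = ⨆ n, g n ^ q :=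
  Monotone.map_iSup_of_continuousAt (f := fun x : ℝ≥0∞ => x ^ q)
    (ENNReal.continuous_rpow_const.continuousAt) (ENNReal.monotone_rpow_of_nonneg hq.le)
    (by simp [ENNReal.zero_rpow_of_pos hq])

private lemma iSup_min_nat (a : ℝ≥0∞) : ⨆ n : ℕ, min a (n : ℝ≥0∞) = a := by
  have : (⨆ n : ℕ, a ⊓ (n : ℝ≥0∞)) = a ⊓ ⨆ n : ℕ, (n : ℝ≥0∞) := (inf_iSup_eq a _).symm
  simpa [ENNReal.iSup_natCast] using this

section Minkowski
variable {α β : Type*} [MeasurableSpace α] [MeasurableSpace β]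
  {μ : Measure α} {ν : Measure β}

/-- Minkowski's integral inequality, finite case. -/
private lemma mink_aux [SFinite μ] [SFinite ν]
    {h : α → β → ℝ≥0∞} (hm : Measurable (uncurry h)) {q : ℝ} (hq : 1 < q)
    (hA : ∫⁻ x, (∫⁻ y, h x y ∂ν) ^ q ∂μ ≠ ∞) :
    (∫⁻ x, (∫⁻ y, h x y ∂ν) ^ q ∂μ) ^ (1 / q) ≤ ∫⁻ y, (∫⁻ x, h x y ^ q ∂μ) ^ (1 / q) ∂ν := by
  have hq0 : 0 < q := lt_trans one_pos hq
  set q' : ℝ := Real.conjExponent q with hq'def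
  have conj : q.HolderConjugate q' := Real.HolderConjugate.conjExponent hq
  set F : α → ℝ≥0∞ := fun x => ∫⁻ y, h x y ∂ν with hF_def
  have hF : Measurable F := hm.lintegral_prod_right'
  set A : ℝ≥0∞ := ∫⁻ x, F x ^ q ∂μ with hA_def
  set B : ℝ≥0∞ := ∫⁻ y, (∫⁻ x, h x y ^ q ∂μ) ^ (1 / q) ∂ν with hB_def
  have hmul : (q - 1) * q' = q := by
    have : q - 1 ≠ 0 := by linarith
    field_simp [hq'def, Real.conjExponent]
    rw [hq'def, Real.conjExponent]; field_simp
  have hq'0 : 0 < q' := conj.symm.pos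
  have key : A ≤ B * A ^ (1 / q') := by
    have step1 : A = ∫⁻ x, ∫⁻ y, h x y * F x ^ (q - 1) ∂ν ∂μ := by
      refine lintegral_congr fun x => ?_
      rw [lintegral_mul_const _ hm.of_uncurry_left]
      have : F x ^ q = F x ^ (1 + (q - 1)) := by ring_nf
      rw [this, ENNReal.rpow_add_of_nonneg _ _ zero_le_one (by linarith), ENNReal.rpow_one]
    have step2 : (∫⁻ x, ∫⁻ y, h x y * F x ^ (q - 1) ∂ν ∂μ)
        = ∫⁻ y, ∫⁻ x, h x y * F x ^ (q - 1) ∂μ ∂ν := by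
      apply lintegral_lintegral_swap
      exact (hm.mul (((ENNReal.continuous_rpow_const (y := q - 1)).measurable.comp hF).comp measurable_fst)).aemeasurable
    have step3 : ∀ y, (∫⁻ x, h x y * F x ^ (q - 1) ∂μ)
        ≤ (∫⁻ x, h x y ^ q ∂μ) ^ (1 / q) * A ^ (1 / q') := by
      intro y
      have hFq1 : Measurable fun x => F x ^ (q - 1) :=
        (ENNReal.continuous_rpow_const (y := q - 1)).measurable.comp hF
      have := ENNReal.lintegral_mul_le_Lp_mul_Lq μ conj (f := fun x => h x y)
        (g := fun x => F x ^ (q - 1)) (hm.of_uncurry_right.aemeasurable) hFq1.aemeasurable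
      simp only [Pi.mul_apply] at this
      refine le_trans this (le_of_eq ?_)
      have : (∫⁻ a, (F a ^ (q - 1)) ^ q' ∂μ) = A := by
        refine lintegral_congr fun x => ?_
        rw [← ENNReal.rpow_mul, hmul]
      rw [this]
    calc A = ∫⁻ y, ∫⁻ x, h x y * F x ^ (q - 1) ∂μ ∂ν := by rw [step1, step2]
      _ ≤ ∫⁻ y, (∫⁻ x, h x y ^ q ∂μ) ^ (1 / q) * A ^ (1 / q') ∂ν := lintegral_mono step3
      _ = B * A ^ (1 / q') := lintegral_mul_const' _ _
            (ENNReal.rpow_ne_top_of_nonneg (one_div_pos.mpr hq'0).le hA)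
  rcases eq_or_ne A 0 with h0 | h0
  · rw [h0, ENNReal.zero_rpow_of_pos (by positivity)]; exact zero_le
  · have hAq' : A ^ (1 / q') ≠ 0 := by
      simpa using (ENNReal.rpow_pos (pos_iff_ne_zero.mpr h0) hA).ne'
    have hAq'top : A ^ (1 / q') ≠ ∞ := ENNReal.rpow_ne_top_of_nonneg (one_div_pos.mpr hq'0).le hA
    rw [← ENNReal.mul_le_mul_iff_left hAq' hAq'top]
    calc A ^ (1 / q) * A ^ (1 / q') = A ^ (1 / q + 1 / q') := (ENNReal.rpow_add _ _ h0 hA).symm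
      _ = A := by rw [one_div, one_div, conj.inv_add_inv_eq_one, ENNReal.rpow_one]
      _ ≤ B * A ^ (1 / q') := key
end Minkowski

section Minkowski2
variable {α β : Type*} [MeasurableSpace α] [MeasurableSpace β]

/-- Minkowski's integral inequality for `ℝ≥0∞`-valued functions. -/
private lemma mink {μ : Measure α} {ν : Measure β} [SigmaFinite μ] [SigmaFinite ν]
    {h : α → β → ℝ≥0∞} (hm : Measurable (uncurry h)) {q : ℝ} (hq : 1 ≤ q) :
    (∫⁻ x, (∫⁻ y, h x y ∂ν) ^ q ∂μ) ^ (1 / q) ≤ ∫⁻ y, (∫⁻ x, h x y ^ q ∂μ) ^ (1 / q) ∂ν := by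
  rcases eq_or_lt_of_le hq with rfl | hq1
  · simp only [ENNReal.rpow_one, one_div_one]
    exact le_of_eq (lintegral_lintegral_swap hm.aemeasurable)
  have hq0 : 0 < q := lt_trans one_pos hq1
  set s := spanningSets μ with hs
  set t := spanningSets ν with ht
  set H : ℕ → α → β → ℝ≥0∞ := fun n x y =>
    (s n).indicator 1 x * (t n).indicator 1 y * min (h x y) n with hH
  have hHmeas : ∀ n, Measurable (uncurry (H n)) := by
    intro n
    show Measurable fun p : α × β =>
      (s n).indicator 1 p.1 * (t n).indicator 1 p.2 * min (h p.1 p.2) n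
    exact (((measurable_one.indicator (measurableSet_spanningSets μ n)).comp
      measurable_fst).mul ((measurable_one.indicator (measurableSet_spanningSets ν n)).comp
      measurable_snd)).mul (hm.min measurable_const)
  have hHmono : ∀ x y, Monotone fun n => H n x y := by
    intro x y n m hnm
    refine mul_le_mul' (mul_le_mul' ?_ ?_) (min_le_min le_rfl (Nat.cast_le.mpr hnm))
    · exact Set.indicator_le_indicator_of_subset (monotone_spanningSets μ hnm)
        (fun _ => zero_le) x
    · exact Set.indicator_le_indicator_of_subset (monotone_spanningSets ν hnm)
        (fun _ => zero_le) y
  have hind_le_one : ∀ (u : Set α) (x : α), u.indicator (1 : α → ℝ≥0∞) x ≤ 1 := by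
    intro u x
    classical
    by_cases hx : x ∈ u <;> simp [hx]
  have hind_le_one' : ∀ (u : Set β) (y : β), u.indicator (1 : β → ℝ≥0∞) y ≤ 1 := by
    intro u y
    classical
    by_cases hy : y ∈ u <;> simp [hy]
  have hHle : ∀ n x y, H n x y ≤ h x y := by
    intro n x y
    calc H n x y ≤ 1 * 1 * min (h x y) n :=
          mul_le_mul' (mul_le_mul' (hind_le_one _ x) (hind_le_one' _ y)) le_rfl
      _ = min (h x y) n := by rw [one_mul, one_mul]
      _ ≤ h x y := min_le_left _ _
  have hHsup : ∀ x y, (⨆ n, H n x y) = h x y := by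
    intro x y
    refine le_antisymm (iSup_le fun n => hHle n x y) ?_
    obtain ⟨N₁, hN₁⟩ : ∃ n, x ∈ s n := by
      have : x ∈ ⋃ n, s n := by rw [hs, iUnion_spanningSets]; trivial
      exact Set.mem_iUnion.mp this
    obtain ⟨N₂, hN₂⟩ : ∃ n, y ∈ t n := by
      have : y ∈ ⋃ n, t n := by rw [ht, iUnion_spanningSets]; trivial
      exact Set.mem_iUnion.mp this
    refine le_trans (le_of_eq (iSup_min_nat (h x y)).symm) (iSup_le fun n => ?_)
    refine le_trans ?_ (le_iSup (fun n => H n x y) (max (max N₁ N₂) n))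
    have hx : x ∈ s (max (max N₁ N₂) n) :=
      monotone_spanningSets μ (le_trans (le_max_left _ _) (le_max_left _ _)) hN₁
    have hy : y ∈ t (max (max N₁ N₂) n) :=
      monotone_spanningSets ν (le_trans (le_max_right _ _) (le_max_left _ _)) hN₂
    simp only [hH, Set.indicator_of_mem hx, Set.indicator_of_mem hy, Pi.one_apply, one_mul]
    exact min_le_min le_rfl (Nat.cast_le.mpr (le_max_right _ _))
  have hFn_meas : ∀ n, Measurable fun x => ∫⁻ y, H n x y ∂ν :=
    fun n => (hHmeas n).lintegral_prod_right'
  have hFn_sup : ∀ x, (⨆ n, ∫⁻ y, H n x y ∂ν) = ∫⁻ y, h x y ∂ν := by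
    intro x
    rw [← lintegral_iSup (fun n => (hHmeas n).of_uncurry_left)
      (fun n m hnm y => hHmono x y hnm)]
    exact lintegral_congr fun y => hHsup x y
  have hAsup : (∫⁻ x, (∫⁻ y, h x y ∂ν) ^ q ∂μ)
      = ⨆ n, ∫⁻ x, (∫⁻ y, H n x y ∂ν) ^ q ∂μ := by
    rw [← lintegral_iSup (f := fun n x => (∫⁻ y, H n x y ∂ν) ^ q)
      (fun n => by
        have : Measurable fun x => (∫⁻ y, H n x y ∂ν) ^ q :=
          (ENNReal.continuous_rpow_const (y := q)).measurable.comp (hFn_meas n)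
        exact this)
      (fun n m hnm x => ENNReal.rpow_le_rpow
        (lintegral_mono fun y => hHmono x y hnm) hq0.le)]
    refine lintegral_congr fun x => ?_
    rw [← hFn_sup x, rpow_iSup hq0]
  have hAn_ne_top : ∀ n, (∫⁻ x, (∫⁻ y, H n x y ∂ν) ^ q ∂μ) ≠ ∞ := by
    intro n
    set C : ℝ≥0∞ := (n : ℝ≥0∞) * ν (t n) with hC
    have hCtop : C ≠ ∞ :=
      ENNReal.mul_ne_top (ENNReal.natCast_ne_top n) (measure_spanningSets_lt_top ν n).ne
    have hbound : ∀ x, (∫⁻ y, H n x y ∂ν) ≤ (s n).indicator (fun _ => C) x := by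
      intro x
      classical
      by_cases hx : x ∈ s n
      · rw [Set.indicator_of_mem hx]
        calc (∫⁻ y, H n x y ∂ν)
            ≤ ∫⁻ y, (t n).indicator (fun _ => (n : ℝ≥0∞)) y ∂ν := by
              refine lintegral_mono fun y => ?_
              by_cases hy : y ∈ t n
              · simp only [hH, Set.indicator_of_mem hy, Set.indicator_of_mem hx,
                  Pi.one_apply, one_mul]
                exact min_le_right _ _
              · simp [hH, Set.indicator_of_notMem hy]
          _ = C := by
              rw [lintegral_indicator_const (measurableSet_spanningSets ν n)]
      · rw [Set.indicator_of_notMem hx]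
        have hzero : ∀ y, H n x y = 0 := fun y => by
          simp [hH, Set.indicator_of_notMem hx]
        simp [hzero]
    refine ne_top_of_le_ne_top (b := C ^ q * μ (s n))
      (ENNReal.mul_ne_top (ENNReal.rpow_ne_top_of_nonneg hq0.le hCtop)
        (measure_spanningSets_lt_top μ n).ne) ?_
    calc (∫⁻ x, (∫⁻ y, H n x y ∂ν) ^ q ∂μ)
        ≤ ∫⁻ x, ((s n).indicator (fun _ => C) x) ^ q ∂μ :=
          lintegral_mono fun x => ENNReal.rpow_le_rpow (hbound x) hq0.le
      _ = ∫⁻ x, (s n).indicator (fun _ => C ^ q) x ∂μ := by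
          refine lintegral_congr fun x => ?_
          classical
          by_cases hx : x ∈ s n <;>
            simp [hx, ENNReal.zero_rpow_of_pos hq0]
      _ = C ^ q * μ (s n) := lintegral_indicator_const (measurableSet_spanningSets μ n) _
  have hBn_le : ∀ n, (∫⁻ y, (∫⁻ x, H n x y ^ q ∂μ) ^ (1 / q) ∂ν)
      ≤ ∫⁻ y, (∫⁻ x, h x y ^ q ∂μ) ^ (1 / q) ∂ν := by
    intro n
    refine lintegral_mono fun y => ENNReal.rpow_le_rpow ?_ (by positivity)
    exact lintegral_mono fun x => ENNReal.rpow_le_rpow (hHle n x y) hq0.le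
  rw [hAsup, rpow_iSup (by positivity)]
  exact iSup_le fun n => le_trans (mink_aux (hHmeas n) hq1 (hAn_ne_top n)) (hBn_le n)

end Minkowski2

local notation "E3" => EuclideanSpace ℝ (Fin 3)

private lemma lint_smul (g : E3 → ℝ≥0∞) (hg : Measurable g) {a : ℝ} (ha : a ≠ 0) :
    ∫⁻ v, g (a • v) = ENNReal.ofReal |(a ^ 3 : ℝ)⁻¹| * ∫⁻ y, g y := by
  calc ∫⁻ v, g (a • v)
      = ∫⁻ y, g y ∂(Measure.map (a • ·) volume) :=
        (lintegral_map hg (measurable_const_smul a)).symm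
    _ = ENNReal.ofReal |(a ^ 3 : ℝ)⁻¹| * ∫⁻ y, g y := by
        rw [Measure.map_addHaar_smul volume ha, finrank_euclideanSpace_fin,
          lintegral_smul_measure, smul_eq_mul]

private lemma lint_sub_left (g : E3 → ℝ≥0∞) (hg : Measurable g) (x : E3) :
    ∫⁻ w, g (x - w) = ∫⁻ y, g y := by
  have h1 : ∀ w : E3, g (x - w) = (fun u => g (x + u)) (-w) := by
    intro w; simp [sub_eq_add_neg]
  simp_rw [h1]
  rw [← lintegral_map (f := fun u => g (x + u)) (hg.comp (measurable_const_add x)) measurable_neg,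
    Measure.map_neg_eq_self (volume : Measure E3)]
  exact lintegral_add_left_eq_self (fun u => g u) x

private lemma lint_sub_right (g : E3 → ℝ≥0∞) (y : E3) :
    ∫⁻ x, g (x - y) = ∫⁻ u, g u :=
  lintegral_sub_right_eq_self g y

/-- Dispersive decay of free transport in mixed Lebesgue norms:
`‖S(t)f‖_{L^p_x L^r_v} ≤ |t|^{-3(1/r - 1/p)} ‖f‖_{L^r_x L^p_v}` for `p ≥ r ≥ 1`. -/
theorem transport_dispersive_decay
    (f : EuclideanSpace ℝ (Fin 3) × EuclideanSpace ℝ (Fin 3) → ℝ) (hf : Measurable f)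
    (t p r : ℝ) (ht : t ≠ 0) (hr : 1 ≤ r) (hpr : r ≤ p) :
    (∫⁻ x : EuclideanSpace ℝ (Fin 3),
        (∫⁻ v : EuclideanSpace ℝ (Fin 3),
          (‖f (x - t • v, v)‖₊ : ℝ≥0∞) ^ r) ^ (p / r)) ^ (1 / p)
      ≤ ENNReal.ofReal (|t| ^ (-(3 * (1 / r - 1 / p))))
        * (∫⁻ x : EuclideanSpace ℝ (Fin 3),
            (∫⁻ v : EuclideanSpace ℝ (Fin 3),
              (‖f (x, v)‖₊ : ℝ≥0∞) ^ p) ^ (r / p)) ^ (1 / r) := by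
  have hr0 : (0:ℝ) < r := lt_of_lt_of_le one_pos hr
  have hp0 : (0:ℝ) < p := lt_of_lt_of_le hr0 hpr
  have habs : (0:ℝ) < |t| := abs_pos.mpr ht
  set c : ℝ≥0∞ := ENNReal.ofReal |((t:ℝ) ^ 3)⁻¹| with hc
  set d : ℝ≥0∞ := ENNReal.ofReal |((t⁻¹ : ℝ) ^ 3)⁻¹| with hd
  set h : E3 → E3 → ℝ≥0∞ := fun x y => (‖f (y, t⁻¹ • (x - y))‖₊ : ℝ≥0∞) with hhdef
  have hmeas : Measurable (uncurry h) := by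
    have hm0 : Measurable fun z : E3 × E3 => (z.2, t⁻¹ • (z.1 - z.2)) :=
      measurable_snd.prodMk ((measurable_fst.sub measurable_snd).const_smul t⁻¹)
    exact (hf.comp hm0).enorm
  have hmeas' : Measurable (uncurry fun x y => h x y ^ r) :=
    (ENNReal.continuous_rpow_const (y := r)).measurable.comp hmeas
  -- Step A : inner change of variables
  have stepA : ∀ x : E3, (∫⁻ v, (‖f (x - t • v, v)‖₊ : ℝ≥0∞) ^ r)
      = c * ∫⁻ y, h x y ^ r := by
    intro x
    have hg1 : Measurable fun w : E3 => (‖f (x - w, t⁻¹ • w)‖₊ : ℝ≥0∞) ^ r := by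
      have hm1 : Measurable fun w : E3 => (x - w, t⁻¹ • w) :=
        (measurable_const.sub measurable_id).prodMk (measurable_id.const_smul t⁻¹)
      exact (ENNReal.continuous_rpow_const (y := r)).measurable.comp (hf.comp hm1).enorm
    have e1 : (∫⁻ v, (‖f (x - t • v, v)‖₊ : ℝ≥0∞) ^ r)
        = ∫⁻ v, (fun w => (‖f (x - w, t⁻¹ • w)‖₊ : ℝ≥0∞) ^ r) (t • v) := by
      refine lintegral_congr fun v => ?_
      simp [inv_smul_smul₀ ht]
    rw [e1, lint_smul _ hg1 ht]
    congr 1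
    have hg2 : Measurable fun y : E3 => h x y ^ r :=
      (ENNReal.continuous_rpow_const (y := r)).measurable.comp hmeas.of_uncurry_left
    rw [← lint_sub_left (fun y => h x y ^ r) hg2 x]
    refine lintegral_congr fun w => ?_
    simp [hhdef, sub_sub_cancel]
  -- Step D : outer change of variables
  have stepD : ∀ y : E3, (∫⁻ x, h x y ^ p) = d * ∫⁻ w, (‖f (y, w)‖₊ : ℝ≥0∞) ^ p := by
    intro y
    have hg3 : Measurable fun w : E3 => (‖f (y, w)‖₊ : ℝ≥0∞) ^ p :=
      (ENNReal.continuous_rpow_const (y := p)).measurable.comp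
        (hf.comp (measurable_const.prodMk measurable_id)).enorm
    have e1 : (∫⁻ x, h x y ^ p)
        = ∫⁻ x, (fun u => (‖f (y, t⁻¹ • u)‖₊ : ℝ≥0∞) ^ p) (x - y) :=
      lintegral_congr fun x => by simp [hhdef]
    rw [e1, lint_sub_right (fun u => (‖f (y, t⁻¹ • u)‖₊ : ℝ≥0∞) ^ p) y]
    exact lint_smul (fun w => (‖f (y, w)‖₊ : ℝ≥0∞) ^ p) hg3 (inv_ne_zero ht)
  have hcne : c ^ (p / r) ≠ ∞ :=
    ENNReal.rpow_ne_top_of_nonneg (div_nonneg hp0.le hr0.le) ENNReal.ofReal_ne_top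
  have hexp1 : (p / r) * (1 / p) = 1 / r := by field_simp
  have hexp2 : (r / p) * (1 / r) = 1 / p := by field_simp
  -- Step B : pull the constant out
  have eq1 : (∫⁻ x, (∫⁻ v, (‖f (x - t • v, v)‖₊ : ℝ≥0∞) ^ r) ^ (p / r)) ^ (1 / p)
      = c ^ (1 / r) * (∫⁻ x, (∫⁻ y, h x y ^ r) ^ (p / r)) ^ (1 / p) := by
    have e0 : (∫⁻ x, (∫⁻ v, (‖f (x - t • v, v)‖₊ : ℝ≥0∞) ^ r) ^ (p / r))
        = c ^ (p / r) * ∫⁻ x, (∫⁻ y, h x y ^ r) ^ (p / r) := by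
      rw [← lintegral_const_mul' _ _ hcne]
      refine lintegral_congr fun x => ?_
      rw [stepA x, ENNReal.mul_rpow_of_nonneg _ _ (div_nonneg hp0.le hr0.le)]
    rw [e0, ENNReal.mul_rpow_of_nonneg _ _ (one_div_nonneg.mpr hp0.le),
      ← ENNReal.rpow_mul, hexp1]
  -- Step C : Minkowski's integral inequality
  have hq : (1:ℝ) ≤ p / r := (one_le_div hr0).mpr hpr
  have hpow : ∀ (x y : E3), (h x y ^ r) ^ (p / r) = h x y ^ p := by
    intro x y
    rw [← ENNReal.rpow_mul]
    congr 1
    field_simp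
  have hmink2 : (∫⁻ x, (∫⁻ y, h x y ^ r) ^ (p / r)) ^ (1 / p)
      ≤ (∫⁻ y, (∫⁻ x, h x y ^ p) ^ (r / p)) ^ (1 / r) := by
    have h1 := mink (μ := (volume : Measure E3)) (ν := (volume : Measure E3)) hmeas' hq
    rw [one_div_div] at h1
    simp only [hpow] at h1
    have h3 := ENNReal.rpow_le_rpow h1 (one_div_nonneg.mpr hr0.le)
    rwa [← ENNReal.rpow_mul, hexp2] at h3
  -- Step D' : rewrite the right-hand side
  have hdne : d ^ (r / p) ≠ ∞ :=
    ENNReal.rpow_ne_top_of_nonneg (div_nonneg hr0.le hp0.le) ENNReal.ofReal_ne_top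
  have stepD' : (∫⁻ y, (∫⁻ x, h x y ^ p) ^ (r / p)) ^ (1 / r)
      = d ^ (1 / p) * (∫⁻ y, (∫⁻ w, (‖f (y, w)‖₊ : ℝ≥0∞) ^ p) ^ (r / p)) ^ (1 / r) := by
    have e0 : (∫⁻ y, (∫⁻ x, h x y ^ p) ^ (r / p))
        = d ^ (r / p) * ∫⁻ y, (∫⁻ w, (‖f (y, w)‖₊ : ℝ≥0∞) ^ p) ^ (r / p) := by
      rw [← lintegral_const_mul' _ _ hdne]
      refine lintegral_congr fun y => ?_
      rw [stepD y, ENNReal.mul_rpow_of_nonneg _ _ (div_nonneg hr0.le hp0.le)]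
    rw [e0, ENNReal.mul_rpow_of_nonneg _ _ (one_div_nonneg.mpr hr0.le),
      ← ENNReal.rpow_mul, hexp2]
  -- constants
  have hconst : c ^ (1 / r) * d ^ (1 / p)
      = ENNReal.ofReal (|t| ^ (-(3 * (1 / r - 1 / p)))) := by
    have hc' : c = ENNReal.ofReal (|t| ^ (-3 : ℝ)) := by
      rw [hc]
      congr 1
      rw [abs_inv, abs_pow, ← Real.rpow_natCast |t| 3, ← Real.rpow_neg habs.le]
      norm_num
    have hd' : d = ENNReal.ofReal (|t| ^ (3 : ℝ)) := by
      rw [hd]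
      congr 1
      rw [inv_pow, inv_inv, abs_pow, ← Real.rpow_natCast |t| 3]
      norm_num
    rw [hc', hd', ENNReal.ofReal_rpow_of_pos (Real.rpow_pos_of_pos habs _),
      ENNReal.ofReal_rpow_of_pos (Real.rpow_pos_of_pos habs _),
      ← Real.rpow_mul habs.le, ← Real.rpow_mul habs.le,
      ← ENNReal.ofReal_mul (Real.rpow_nonneg habs.le _),
      ← Real.rpow_add habs]
    congr 1
    ring
  calc (∫⁻ x, (∫⁻ v, (‖f (x - t • v, v)‖₊ : ℝ≥0∞) ^ r) ^ (p / r)) ^ (1 / p)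
      = c ^ (1 / r) * (∫⁻ x, (∫⁻ y, h x y ^ r) ^ (p / r)) ^ (1 / p) := eq1
    _ ≤ c ^ (1 / r) * (∫⁻ y, (∫⁻ x, h x y ^ p) ^ (r / p)) ^ (1 / r) :=
        mul_le_mul_right hmink2 _
    _ = c ^ (1 / r) * (d ^ (1 / p)
          * (∫⁻ y, (∫⁻ w, (‖f (y, w)‖₊ : ℝ≥0∞) ^ p) ^ (r / p)) ^ (1 / r)) := by rw [stepD']
    _ = (c ^ (1 / r) * d ^ (1 / p))
          * (∫⁻ y, (∫⁻ w, (‖f (y, w)‖₊ : ℝ≥0∞) ^ p) ^ (r / p)) ^ (1 / r) := (mul_assoc _ _ _).symm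
    _ = ENNReal.ofReal (|t| ^ (-(3 * (1 / r - 1 / p))))
          * (∫⁻ x, (∫⁻ v, (‖f (x, v)‖₊ : ℝ≥0∞) ^ p) ^ (r / p)) ^ (1 / r) := by rw [hconst]
end
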